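/- arXiv:2506.16564 — 2 statements merged into one kernel-verified Lean document; each statement's English description precedes it below -/
import Mathlib

section
/- Let U ⊆ ℝᵐ be a nonempty compact convex set, and let Ψ : ℝᵐ × ℝᵐ → ℝ be such that for each w, u ↦ Ψ(u,w) is differentiable and μ-strongly convex, and for each u, w ↦ ∇_u Ψ(u,w) is ℓ-Lipschitz. Define T(w) = argmin_{u ∈ U} Ψ(u,w) (which is a singleton). Then T is (ℓ/μ)-Lipschitz, i.e., ‖T(w) − T(w')‖ ≤ (ℓ/μ)‖w − w'‖ for all w, w' ∈ U. -/
open InnerProductSpace Filter Set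

local notation "⟪" x ", " y "⟫" => @inner ℝ _ _ x y

-- derivative of the line composition
lemma line_hasDerivAt {E : Type*} [NormedAddCommGroup E] [InnerProductSpace ℝ E] [CompleteSpace E]
    {f : E → ℝ} {g x y : E} (hg : HasGradientAt f g x) :
    HasDerivAt (fun t : ℝ => f (x + t • (y - x))) ⟪g, y - x⟫ 0 := by
  have hline : HasDerivAt (fun t : ℝ => x + t • (y - x)) (y - x) 0 := by
    simpa using ((hasDerivAt_id (0 : ℝ)).smul_const (y - x)).const_add x
  have hF := hasGradientAt_iff_hasFDerivAt.mp hg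
  have h0 : x + (0 : ℝ) • (y - x) = x := by simp
  have := (h0 ▸ hF).comp_hasDerivAt 0 hline
  simp only [InnerProductSpace.toDual_apply_apply] at this
  exact this

lemma slope_tendsto {E : Type*} [NormedAddCommGroup E] [InnerProductSpace ℝ E] [CompleteSpace E]
    {f : E → ℝ} {g x y : E} (hg : HasGradientAt f g x) :
    Tendsto (fun t : ℝ => (f (x + t • (y - x)) - f x) / t) (nhdsWithin 0 (Ioi 0))
      (nhds ⟪g, y - x⟫) := by
  have h := (hasDerivAt_iff_tendsto_slope.mp (line_hasDerivAt (y := y) hg)).mono_left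
    (nhdsWithin_mono 0 (fun t (ht : t ∈ Ioi (0:ℝ)) => ne_of_gt ht))
  have : ∀ t : ℝ, slope (fun t : ℝ => f (x + t • (y - x))) 0 t
      = (f (x + t • (y - x)) - f x) / t := by
    intro t; simp [slope_def_field]
  rwa [show slope (fun t : ℝ => f (x + t • (y - x))) 0
      = fun t => (f (x + t • (y - x)) - f x) / t from funext this] at h

lemma first_order_opt {E : Type*} [NormedAddCommGroup E] [InnerProductSpace ℝ E] [CompleteSpace E]
    {s : Set E} (hs : Convex ℝ s) {f : E → ℝ} {g x y : E} (hx : x ∈ s) (hy : y ∈ s)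
    (hg : HasGradientAt f g x) (hmin : IsMinOn f s x) :
    0 ≤ ⟪g, y - x⟫ := by
  refine ge_of_tendsto (slope_tendsto hg) ?_
  filter_upwards [Ioc_mem_nhdsGT_of_mem (Set.mem_Ico.mpr ⟨le_refl (0:ℝ), one_pos⟩)] with t ht
  have hmem : x + t • (y - x) ∈ s := by
    have := hs hy hx (le_of_lt ht.1) (by linarith [ht.2] : (0:ℝ) ≤ 1 - t) (by ring)
    have heq : t • y + (1 - t) • x = x + t • (y - x) := by
      simp [smul_sub, sub_smul]; abel
    rwa [heq] at this
  have : f x ≤ f (x + t • (y - x)) := hmin hmem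
  exact div_nonneg (by linarith) ht.1.le

lemma strong_lower_bound {E : Type*} [NormedAddCommGroup E] [InnerProductSpace ℝ E] [CompleteSpace E]
    {s : Set E} {f : E → ℝ} {μ : ℝ} {g x y : E}
    (hf : StrongConvexOn s μ f) (hx : x ∈ s) (hy : y ∈ s) (hg : HasGradientAt f g x) :
    ⟪g, y - x⟫ + μ / 2 * ‖y - x‖ ^ 2 ≤ f y - f x := by
  have htend : Tendsto
      (fun t : ℝ => (f (x + t • (y - x)) - f x) / t + (1 - t) * (μ / 2 * ‖y - x‖ ^ 2))
      (nhdsWithin 0 (Ioi 0)) (nhds (⟪g, y - x⟫ + μ / 2 * ‖y - x‖ ^ 2)) := by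
    have h2 : Tendsto (fun t : ℝ => (1 - t) * (μ / 2 * ‖y - x‖ ^ 2))
        (nhdsWithin 0 (Ioi 0)) (nhds (μ / 2 * ‖y - x‖ ^ 2)) := by
      have : ContinuousAt (fun t : ℝ => (1 - t) * (μ / 2 * ‖y - x‖ ^ 2)) 0 := ((continuous_const.sub continuous_id).mul continuous_const).continuousAt
      simpa using this.continuousWithinAt.tendsto
    exact (slope_tendsto hg).add h2
  refine le_of_tendsto htend ?_
  filter_upwards [Ioc_mem_nhdsGT_of_mem (Set.mem_Ico.mpr ⟨le_refl (0:ℝ), one_pos⟩)] with t ht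
  have hcomb := hf.2 hy hx (le_of_lt ht.1) (by linarith [ht.2] : (0:ℝ) ≤ 1 - t) (by ring)
  have heq : t • y + (1 - t) • x = x + t • (y - x) := by
    simp [smul_sub, sub_smul]; abel
  rw [heq] at hcomb
  have hnorm : ‖y - x‖ = ‖x - y‖ := norm_sub_rev _ _
  rw [div_add' _ _ _ (ne_of_gt ht.1), div_le_iff₀ ht.1]
  simp only [smul_eq_mul] at hcomb
  nlinarith [hcomb, ht.1, sq_nonneg (‖y - x‖)]

theorem argmin_lipschitz
    {m : ℕ} (U : Set (EuclideanSpace ℝ (Fin m)))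
    (hne : U.Nonempty) (hcomp : IsCompact U) (hconv : Convex ℝ U)
    (Ψ : EuclideanSpace ℝ (Fin m) → EuclideanSpace ℝ (Fin m) → ℝ)
    (G : EuclideanSpace ℝ (Fin m) → EuclideanSpace ℝ (Fin m) → EuclideanSpace ℝ (Fin m))
    (μ ℓ : ℝ) (hμ : 0 < μ) (hℓ : 0 ≤ ℓ)
    (hgrad : ∀ w u, HasGradientAt (fun u' => Ψ u' w) (G u w) u)
    (hsc : ∀ w ∈ U, StrongConvexOn U μ (fun u => Ψ u w))
    (hlip : ∀ u ∈ U, LipschitzOnWith (Real.toNNReal ℓ) (fun w => G u w) U)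
    (T : EuclideanSpace ℝ (Fin m) → EuclideanSpace ℝ (Fin m))
    (hT : ∀ w ∈ U, T w ∈ U ∧ IsMinOn (fun u => Ψ u w) U (T w)) :
    ∀ w ∈ U, ∀ w' ∈ U, ‖T w - T w'‖ ≤ (ℓ / μ) * ‖w - w'‖ := by
  intro w hw w' hw'
  obtain ⟨ha, hamin⟩ := hT w hw
  obtain ⟨hb, hbmin⟩ := hT w' hw'
  set a := T w
  set b := T w'
  have h1 := strong_lower_bound (hsc w hw) ha hb (hgrad w a)
  have h2 := strong_lower_bound (hsc w hw) hb ha (hgrad w b)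
  have opt1 : 0 ≤ ⟪G a w, b - a⟫ := first_order_opt hconv ha hb (hgrad w a) hamin
  have opt2 : 0 ≤ ⟪G b w', a - b⟫ := first_order_opt hconv hb ha (hgrad w' b) hbmin
  have hnorm : ‖b - a‖ = ‖a - b‖ := norm_sub_rev _ _
  -- strong monotonicity
  have hmono : μ * ‖a - b‖ ^ 2 ≤ ⟪G b w' - G b w, a - b⟫ := by
    rw [inner_sub_left]
    have hsum : ⟪G a w, b - a⟫ + ⟪G b w, a - b⟫ + μ * ‖a - b‖ ^ 2 ≤ 0 := by
      rw [hnorm] at h1; linarith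
    linarith
  have hcs : ⟪G b w' - G b w, a - b⟫ ≤ ‖G b w' - G b w‖ * ‖a - b‖ :=
    real_inner_le_norm _ _
  have hlipb : ‖G b w' - G b w‖ ≤ ℓ * ‖w' - w‖ := by
    have h := lipschitzOnWith_iff_dist_le_mul.mp (hlip b hb) w' hw' w hw
    simpa [dist_eq_norm, Real.coe_toNNReal ℓ hℓ] using h
  have hww : ‖w' - w‖ = ‖w - w'‖ := norm_sub_rev _ _
  rcases eq_or_lt_of_le (norm_nonneg (a - b)) with hz | hz
  · rw [← hz]
    positivity
  · rw [div_mul_eq_mul_div, le_div_iff₀ hμ]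
    have hfin : ‖G b w' - G b w‖ * ‖a - b‖ ≤ ℓ * ‖w - w'‖ * ‖a - b‖ := by
      rw [← hww]; exact mul_le_mul_of_nonneg_right hlipb (norm_nonneg _)
    nlinarith [hmono, hcs.trans hfin]
end

section
/- Let U ⊆ ℝᵐ be nonempty compact convex, and Ψ : ℝᵐ × ℝᵐ → ℝ with Ψ(·,w) differentiable and μ-strongly convex for each w, and ∇_u Ψ(u,·) ℓ-Lipschitz for each u, with ℓ < μ. Then the map T(w) = argmin_{u∈U} Ψ(u,w) has a unique fixed point u* in U, and for any u₀ ∈ U the iteration u_{n+1} = T(u_n) satisfies ‖u_n − u*‖ ≤ (ℓ/μ)ⁿ ‖u₀ − u*‖, hence converges to u*. -/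
open Filter Set

section Aux
variable {E : Type*} [NormedAddCommGroup E] [InnerProductSpace ℝ E] [CompleteSpace E]

local notation "⟪" x ", " y "⟫" => @inner ℝ _ _ x y

lemma aux_deriv_le_of_slope {φ ψ : ℝ → ℝ} {d c : ℝ}
    (hφ : HasDerivAt φ d 0)
    (hψ : Tendsto ψ (nhdsWithin 0 (Set.Ioi 0)) (nhds c))
    (h : ∀ t ∈ Set.Ioc (0:ℝ) 1, φ t - φ 0 ≤ t * ψ t) : d ≤ c := by
  have hslope := hasDerivAt_iff_tendsto_slope.1 hφ
  have h1 : Tendsto (slope φ 0) (nhdsWithin 0 (Set.Ioi 0)) (nhds d) :=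
    hslope.mono_left (nhdsWithin_mono _ (fun t ht => ne_of_gt ht))
  refine le_of_tendsto_of_tendsto h1 hψ ?_
  filter_upwards [Ioc_mem_nhdsGT_of_mem (Set.left_mem_Ico.2 one_pos)] with t ht
  have ht0 : 0 < t := ht.1
  rw [slope_def_field, sub_zero, div_le_iff₀ ht0, mul_comm]
  exact h t ht

lemma aux_hasDerivAt_line {f : E → ℝ} {g x y : E} (hg : HasGradientAt f g x) :
    HasDerivAt (fun t : ℝ => f (x + t • (y - x))) ⟪g, y - x⟫ 0 := by
  have hc : HasDerivAt (fun t : ℝ => x + t • (y - x)) (y - x) 0 := by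
    simpa using ((hasDerivAt_id (0:ℝ)).smul_const (y - x)).const_add x
  have hF : HasFDerivAt f ((InnerProductSpace.toDual ℝ E) g) (x + (0:ℝ) • (y - x)) := by
    simpa using hasGradientAt_iff_hasFDerivAt.1 hg
  exact (hF.comp_hasDerivAt (x := (0:ℝ)) hc).congr_deriv (by simp)

/-- First-order condition for strong convexity. -/
lemma aux_strong_grad_ineq {U : Set E} {f : E → ℝ} {g x y : E} {μ : ℝ}
    (hsc : StrongConvexOn U μ f) (hx : x ∈ U) (hy : y ∈ U)
    (hg : HasGradientAt f g x) :
    ⟪g, y - x⟫ ≤ f y - f x - μ / 2 * ‖y - x‖ ^ 2 := by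
  have hd : HasDerivAt (fun t : ℝ => f (x + t • (y - x))) ⟪g, y - x⟫ 0 :=
    aux_hasDerivAt_line hg
  have hψ : Tendsto (fun t : ℝ => f y - f x - (1 - t) * (μ / 2 * ‖y - x‖ ^ 2))
      (nhdsWithin 0 (Set.Ioi 0)) (nhds (f y - f x - μ / 2 * ‖y - x‖ ^ 2)) := by
    have hcont : Continuous (fun t : ℝ => f y - f x - (1 - t) * (μ / 2 * ‖y - x‖ ^ 2)) := by
      fun_prop
    have h0 := (hcont.tendsto 0).mono_left
      (nhdsWithin_le_nhds (s := Set.Ioi (0:ℝ)))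
    simpa using h0
  refine aux_deriv_le_of_slope hd hψ ?_
  intro t ht
  have h1t : (0:ℝ) ≤ 1 - t := by linarith [ht.2]
  have hcomb := hsc.2 hx hy h1t (le_of_lt ht.1) (by ring)
  have hpt : x + t • (y - x) = (1 - t) • x + t • y := by
    rw [smul_sub, sub_smul, one_smul]; abel
  have hnorm : ‖x - y‖ = ‖y - x‖ := norm_sub_rev _ _
  simp only [zero_smul, add_zero, hpt]
  simp only [smul_eq_mul, hnorm] at hcomb ⊢
  nlinarith [hcomb]

/-- Variational inequality at a constrained minimum. -/
lemma aux_varineq {U : Set E} {f : E → ℝ} {g x y : E}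
    (hconv : Convex ℝ U) (hmin : IsMinOn f U x) (hx : x ∈ U) (hy : y ∈ U)
    (hg : HasGradientAt f g x) : 0 ≤ ⟪g, y - x⟫ := by
  have hd : HasDerivAt (fun t : ℝ => -f (x + t • (y - x))) (-⟪g, y - x⟫) 0 :=
    (aux_hasDerivAt_line hg).neg
  have h := aux_deriv_le_of_slope hd (tendsto_const_nhds (x := (0:ℝ))) ?_
  · linarith
  intro t ht
  have h1t : (0:ℝ) ≤ 1 - t := by linarith [ht.2]
  have hpt : x + t • (y - x) = (1 - t) • x + t • y := by
    rw [smul_sub, sub_smul, one_smul]; abel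
  have hmem : x + t • (y - x) ∈ U := by
    rw [hpt]; exact hconv hx hy h1t (le_of_lt ht.1) (by ring)
  have := hmin hmem
  simp only [zero_smul, add_zero, mul_zero]
  simpa using this

end Aux

open Filter

theorem argmin_iteration_converges
    {m : ℕ} (U : Set (EuclideanSpace ℝ (Fin m)))
    (hne : U.Nonempty) (hcomp : IsCompact U) (hconv : Convex ℝ U)
    (Ψ : EuclideanSpace ℝ (Fin m) → EuclideanSpace ℝ (Fin m) → ℝ)
    (G : EuclideanSpace ℝ (Fin m) → EuclideanSpace ℝ (Fin m) → EuclideanSpace ℝ (Fin m))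
    (μ ℓ : ℝ) (hμ : 0 < μ) (hℓ : 0 ≤ ℓ) (hℓμ : ℓ < μ)
    (hgrad : ∀ w u, HasGradientAt (fun u' => Ψ u' w) (G u w) u)
    (hsc : ∀ w ∈ U, StrongConvexOn U μ (fun u => Ψ u w))
    (hlip : ∀ u ∈ U, LipschitzOnWith (Real.toNNReal ℓ) (fun w => G u w) U)
    (T : EuclideanSpace ℝ (Fin m) → EuclideanSpace ℝ (Fin m))
    (hT : ∀ w ∈ U, T w ∈ U ∧ IsMinOn (fun u => Ψ u w) U (T w)) :
    ∃ ustar ∈ U, T ustar = ustar ∧ (∀ u ∈ U, T u = u → u = ustar) ∧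
      ∀ u₀ ∈ U, (∀ n : ℕ, ‖T^[n] u₀ - ustar‖ ≤ (ℓ / μ) ^ n * ‖u₀ - ustar‖) ∧
        Tendsto (fun n : ℕ => T^[n] u₀) atTop (nhds ustar) := by
  have hk0 : (0:ℝ) ≤ ℓ / μ := div_nonneg hℓ hμ.le
  have hk1 : ℓ / μ < 1 := (div_lt_one hμ).2 hℓμ
  -- contraction property
  have key : ∀ w₁ ∈ U, ∀ w₂ ∈ U, ‖T w₁ - T w₂‖ ≤ ℓ / μ * ‖w₁ - w₂‖ := by
    intro w₁ hw₁ w₂ hw₂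
    set u₁ := T w₁ with hu₁def
    set u₂ := T w₂ with hu₂def
    have hu₁ : u₁ ∈ U := (hT w₁ hw₁).1
    have hu₂ : u₂ ∈ U := (hT w₂ hw₂).1
    have A := aux_strong_grad_ineq (hsc w₁ hw₁) hu₁ hu₂ (hgrad w₁ u₁)
    have B := aux_strong_grad_ineq (hsc w₁ hw₁) hu₂ hu₁ (hgrad w₁ u₂)
    have V1 : (0:ℝ) ≤ inner ℝ (G u₁ w₁) (u₂ - u₁) :=
      aux_varineq hconv (hT w₁ hw₁).2 hu₁ hu₂ (hgrad w₁ u₁)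
    have V2 : (0:ℝ) ≤ inner ℝ (G u₂ w₂) (u₁ - u₂) :=
      aux_varineq hconv (hT w₂ hw₂).2 hu₂ hu₁ (hgrad w₂ u₂)
    -- strong monotonicity
    have hmono : μ * ‖u₁ - u₂‖ ^ 2 ≤ inner ℝ (G u₁ w₁ - G u₂ w₁) (u₁ - u₂) := by
      have e1 : (inner ℝ (G u₁ w₁) (u₂ - u₁) : ℝ) = - inner ℝ (G u₁ w₁) (u₁ - u₂) := by
        rw [← inner_neg_right]; congr 1; abel
      have e2 : ‖u₂ - u₁‖ = ‖u₁ - u₂‖ := norm_sub_rev _ _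
      rw [inner_sub_left]
      rw [e1, e2] at A
      nlinarith [A, B]
    have hchain : inner ℝ (G u₁ w₁ - G u₂ w₁) (u₁ - u₂) ≤
        (inner ℝ (G u₂ w₂ - G u₂ w₁) (u₁ - u₂) : ℝ) := by
      rw [inner_sub_left, inner_sub_left]
      have e1 : (inner ℝ (G u₁ w₁) (u₂ - u₁) : ℝ) = - inner ℝ (G u₁ w₁) (u₁ - u₂) := by
        rw [← inner_neg_right]; congr 1; abel
      rw [e1] at V1
      linarith
    have hcs : (inner ℝ (G u₂ w₂ - G u₂ w₁) (u₁ - u₂) : ℝ) ≤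
        ‖G u₂ w₂ - G u₂ w₁‖ * ‖u₁ - u₂‖ := real_inner_le_norm _ _
    have hlipb : ‖G u₂ w₂ - G u₂ w₁‖ ≤ ℓ * ‖w₂ - w₁‖ := by
      have := (hlip u₂ hu₂).dist_le_mul w₂ hw₂ w₁ hw₁
      rwa [dist_eq_norm, dist_eq_norm, Real.coe_toNNReal _ hℓ] at this
    have hfin : μ * ‖u₁ - u₂‖ ^ 2 ≤ ℓ * ‖w₁ - w₂‖ * ‖u₁ - u₂‖ := by
      have e : ‖w₂ - w₁‖ = ‖w₁ - w₂‖ := norm_sub_rev _ _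
      nlinarith [norm_nonneg (u₁ - u₂), hmono, hchain, hcs, hlipb, e.symm ▸ hlipb]
    rcases eq_or_lt_of_le (norm_nonneg (u₁ - u₂)) with h0 | h0
    · rw [← h0]; positivity
    · rw [div_mul_eq_mul_div, le_div_iff₀ hμ]
      nlinarith [hfin]
  -- fixed point via Banach
  haveI : Nonempty U := hne.to_subtype
  haveI : CompleteSpace U := hcomp.isClosed.completeSpace_coe
  set f : U → U := fun u => ⟨T u, (hT u u.2).1⟩ with hfdef
  have hcontr : ContractingWith (Real.toNNReal (ℓ / μ)) f := by
    constructor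
    · simpa [Real.toNNReal_lt_one] using hk1
    · refine LipschitzWith.of_dist_le_mul fun a b => ?_
      rw [Subtype.dist_eq, Subtype.dist_eq, dist_eq_norm, dist_eq_norm, Real.coe_toNNReal _ hk0]
      exact key a a.2 b b.2
  set us : U := ContractingWith.fixedPoint f hcontr with husdef
  have hfix : f us = us := hcontr.fixedPoint_isFixedPt
  have hfixT : T (us : EuclideanSpace ℝ (Fin m)) = us := congrArg Subtype.val hfix
  refine ⟨us, us.2, hfixT, ?_, ?_⟩
  · intro u hu hTu
    have h := key u hu us us.2
    rw [hTu, hfixT] at h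
    have : ‖u - (us : EuclideanSpace ℝ (Fin m))‖ = 0 := by nlinarith [norm_nonneg (u - (us : EuclideanSpace ℝ (Fin m)))]
    have := norm_eq_zero.1 this
    exact sub_eq_zero.1 this
  · intro u₀ hu₀
    have hmem : ∀ n : ℕ, T^[n] u₀ ∈ U := by
      intro n; induction n with
      | zero => simpa using hu₀
      | succ n ih => rw [Function.iterate_succ_apply']; exact (hT _ ih).1
    have hbound : ∀ n : ℕ, ‖T^[n] u₀ - us‖ ≤ (ℓ / μ) ^ n * ‖u₀ - us‖ := by
      intro n; induction n with
      | zero => simp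
      | succ n ih =>
        rw [Function.iterate_succ_apply']
        calc ‖T (T^[n] u₀) - (us : EuclideanSpace ℝ (Fin m))‖
            = ‖T (T^[n] u₀) - T us‖ := by rw [hfixT]
          _ ≤ ℓ / μ * ‖T^[n] u₀ - us‖ := key _ (hmem n) us us.2
          _ ≤ ℓ / μ * ((ℓ / μ) ^ n * ‖u₀ - us‖) := by
              exact mul_le_mul_of_nonneg_left ih hk0
          _ = (ℓ / μ) ^ (n + 1) * ‖u₀ - us‖ := by ring
    refine ⟨hbound, ?_⟩
    rw [tendsto_iff_norm_sub_tendsto_zero]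
    have hlim : Tendsto (fun n : ℕ => (ℓ / μ) ^ n * ‖u₀ - (us : EuclideanSpace ℝ (Fin m))‖)
        atTop (nhds 0) := by
      have := (tendsto_pow_atTop_nhds_zero_of_lt_one hk0 hk1).mul_const
        ‖u₀ - (us : EuclideanSpace ℝ (Fin m))‖
      simpa using this
    exact squeeze_zero (fun n => norm_nonneg _) hbound hlim
end
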